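/- Let f(x) = log₂(x+1) and let d > 1. For real r ≥ 2 define recursively r₀ = r and r_{k+1} = r_k^{f(r_k)}. Then there exists R > 1 such that for every r ≥ R: f(r_k) > d² for every k ≥ 0, and the infinite product β(r) = Π_{k=0}^∞ (1/(1 − d/√f(r_k))) · (f(9 r_k)/f(r_k)) converges to a finite limit. -/

import Mathlib

noncomputable def flog (x : ℝ) : ℝ := Real.logb 2 (x + 1)

/-- The recursively defined sequence `r₀ = r`, `r_{k+1} = r_k ^ f(r_k)`. -/
noncomputable def rseq (r : ℝ) : ℕ → ℝ
  | 0 => r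
  | k + 1 => rseq r k ^ flog (rseq r k)

/-!
Write `F_k = f(r_k)`. Since `f(x) - 1 ≤ log₂ x` for `x ≥ 1`, we get
`F_{k+1} ≥ log₂ (r_k ^ F_k) = F_k log₂ r_k ≥ F_k (F_k - 1)`, so once `F_0 ≥ 3` the values `F_k`
at least double at each step. Both factors of the `k`-th term are `1 + O(F_k^{-1/2})`:
`(1 - t)⁻¹ ≤ 1 + 2t` for `t ≤ 1/2`, and `f(9x) ≤ f(x) + 4` because `9x + 1 ≤ 2⁴ (x + 1)`.
Geometric growth of `F_k` makes these error terms summable, hence both products converge.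
-/

open Real

lemma flog_le_flog {x y : ℝ} (hx : -1 < x) (h : x ≤ y) : flog x ≤ flog y :=
  logb_le_logb_of_le one_lt_two (by linarith) (by linarith)

lemma logb_le_flog {x : ℝ} (hx : 0 < x) : logb 2 x ≤ flog x :=
  logb_le_logb_of_le one_lt_two hx (by linarith)

lemma flog_le_logb_add_one {x : ℝ} (hx : 1 ≤ x) : flog x ≤ logb 2 x + 1 := by
  calc flog x ≤ logb 2 (2 * x) := logb_le_logb_of_le one_lt_two (by linarith) (by linarith)
    _ = logb 2 x + 1 := by
      rw [logb_mul two_ne_zero (by positivity), logb_self_eq_one one_lt_two, add_comm]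

lemma flog_nine_mul_le {x : ℝ} (hx : 0 ≤ x) : flog (9 * x) ≤ flog x + 4 := by
  calc flog (9 * x) ≤ logb 2 (2 ^ (4 : ℕ) * (x + 1)) :=
        logb_le_logb_of_le one_lt_two (by positivity) (by linarith)
    _ = flog x + 4 := by
      rw [logb_mul (by positivity) (by linarith), logb_pow, logb_self_eq_one one_lt_two, flog]
      ring

lemma mul_flog_sub_one_le_flog_rpow {x y : ℝ} (hx : 1 ≤ x) (hy : 0 ≤ y) :
    y * (flog x - 1) ≤ flog (x ^ y) := by
  calc y * (flog x - 1) ≤ y * logb 2 x := by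
        gcongr
        linarith [flog_le_logb_add_one hx]
    _ = logb 2 (x ^ y) := (logb_rpow_eq_mul_logb_of_pos (by linarith)).symm
    _ ≤ flog (x ^ y) := logb_le_flog (by positivity)

lemma one_le_rseq {r : ℝ} (hr : 1 ≤ r) (k : ℕ) : 1 ≤ rseq r k := by
  induction k with
  | zero => exact hr
  | succ k ih => exact one_le_rpow ih (logb_nonneg one_lt_two (by linarith))

lemma flog_mul_two_pow_le_flog_rseq {r : ℝ} (hr : 1 ≤ r) (h3 : 3 ≤ flog r) (k : ℕ) :
    flog r * 2 ^ k ≤ flog (rseq r k) := by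
  induction k with
  | zero => simp [rseq]
  | succ k ih =>
    set F := flog (rseq r k)
    have hF : 3 ≤ F := by
      have : flog r ≤ flog r * 2 ^ k :=
        le_mul_of_one_le_right (by linarith) (one_le_pow₀ one_le_two)
      linarith
    calc flog r * 2 ^ (k + 1) = flog r * 2 ^ k * 2 := by ring
      _ ≤ F * (F - 1) := by gcongr; linarith
      _ ≤ flog (rseq r (k + 1)) := mul_flog_sub_one_le_flog_rpow (one_le_rseq hr k) (by linarith)

lemma summable_inv_of_mul_pow_le {F : ℕ → ℝ} {c q : ℝ} (hc : 0 < c) (hq : 1 < q)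
    (hF : ∀ k, c * q ^ k ≤ F k) : Summable fun k => (F k)⁻¹ := by
  have hpos k : 0 < c * q ^ k := by positivity
  have hgeom :=
    (summable_geometric_of_lt_one (by positivity) (inv_lt_one_of_one_lt₀ hq)).mul_left c⁻¹
  refine hgeom.of_nonneg_of_le (fun k => (inv_pos.2 ((hpos k).trans_le (hF k))).le) (fun k => ?_)
  calc (F k)⁻¹ ≤ (c * q ^ k)⁻¹ := inv_anti₀ (hpos k) (hF k)
    _ = c⁻¹ * q⁻¹ ^ k := by rw [mul_inv, inv_pow]

lemma multipliable_of_one_le_of_sub_one_le {ι : Type*} {a b : ι → ℝ} (hb : Summable b)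
    (h1 : ∀ i, 1 ≤ a i) (h : ∀ i, a i - 1 ≤ b i) : Multipliable a := by
  have : Summable fun i => a i - 1 :=
    hb.of_nonneg_of_le (fun i => sub_nonneg.2 (h1 i)) h
  simpa using Real.multipliable_one_add_of_summable this

lemma inv_one_sub_sub_one_le {t : ℝ} (h0 : 0 ≤ t) (h : t ≤ 1 / 2) : (1 - t)⁻¹ - 1 ≤ 2 * t := by
  rw [inv_eq_one_div, div_sub_one (by linarith), div_le_iff₀ (by linarith)]
  nlinarith

lemma multipliable_inv_one_sub_div_sqrt {d c : ℝ} {F : ℕ → ℝ} (hd : 0 ≤ d) (hc0 : 0 < c)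
    (hc : 4 * d ^ 2 ≤ c) (hF : ∀ k, c * 2 ^ k ≤ F k) :
    Multipliable fun k => (1 - d / √(F k))⁻¹ := by
  have hsqrtF k : √c * √2 ^ k ≤ √(F k) := by
    refine le_sqrt_of_sq_le ?_
    rw [mul_pow, ← pow_mul, mul_comm k, pow_mul, sq_sqrt hc0.le, sq_sqrt zero_le_two]
    exact hF k
  have hpos k : 0 < √(F k) := (mul_pos (sqrt_pos.2 hc0) (by positivity)).trans_le (hsqrtF k)
  have htwo_d k : 2 * d ≤ √(F k) := by
    refine le_sqrt_of_sq_le ?_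
    linarith [hF k, le_mul_of_one_le_right hc0.le (one_le_pow₀ (one_le_two : (1 : ℝ) ≤ 2) (n := k))]
  have ht k : d / √(F k) ≤ 1 / 2 := by
    rw [div_le_iff₀ (hpos k)]
    linarith [htwo_d k]
  have ht0 k : 0 ≤ d / √(F k) := div_nonneg hd (hpos k).le
  have hsummable := (summable_inv_of_mul_pow_le (sqrt_pos.2 hc0)
    (lt_sqrt_of_sq_lt (by norm_num)) hsqrtF).mul_left (2 * d)
  refine multipliable_of_one_le_of_sub_one_le hsummable (fun k => ?_) (fun k => ?_)
  · exact (one_le_inv₀ (by linarith [ht k])).2 (by linarith [ht0 k])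
  · simpa [div_eq_mul_inv, mul_assoc] using inv_one_sub_sub_one_le (ht0 k) (ht k)

lemma multipliable_flog_nine_mul_div {x : ℕ → ℝ} {c : ℝ} (hx : ∀ k, 0 ≤ x k) (hc : 0 < c)
    (hF : ∀ k, c * 2 ^ k ≤ flog (x k)) :
    Multipliable fun k => flog (9 * x k) / flog (x k) := by
  have hpos k : 0 < flog (x k) := (by positivity : 0 < c * 2 ^ k).trans_le (hF k)
  refine multipliable_of_one_le_of_sub_one_le
    ((summable_inv_of_mul_pow_le hc one_lt_two hF).mul_left 4) (fun k => ?_) (fun k => ?_)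
  · rw [one_le_div (hpos k)]
    exact flog_le_flog (by linarith [hx k]) (by linarith [hx k])
  · rw [div_sub_one (hpos k).ne', ← div_eq_mul_inv, div_le_div_iff_of_pos_right (hpos k)]
    linarith [flog_nine_mul_le (hx k)]

/-- for any `d > 1` there is `R > 1` such that for all `r ≥ R` the
values `f(r_k)` exceed `d²` and the infinite product
`β(r) = ∏ₖ (1 - d/√f(r_k))⁻¹ · (f(9 r_k)/f(r_k))` converges. -/
theorem beta_product_converges (d : ℝ) (hd : 1 < d) :
    ∃ R : ℝ, 1 < R ∧ ∀ r : ℝ, R ≤ r →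
      (∀ k : ℕ, d ^ 2 < flog (rseq r k)) ∧
      Multipliable (fun k : ℕ =>
        (1 - d / Real.sqrt (flog (rseq r k)))⁻¹ *
          (flog (9 * rseq r k) / flog (rseq r k))) := by
  set M := 4 * d ^ 2
  have hR : 1 < (2 : ℝ) ^ M := one_lt_rpow one_lt_two (by positivity)
  refine ⟨2 ^ M, hR, fun r hr => ?_⟩
  have hr1 : 1 ≤ r := hR.le.trans hr
  have hMr : M ≤ flog r :=
    calc M = logb 2 (2 ^ M) := (logb_rpow two_pos one_lt_two.ne').symm
      _ ≤ logb 2 r := logb_le_logb_of_le one_lt_two (by positivity) hr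
      _ ≤ flog r := logb_le_flog (by linarith)
  have hgrowth := flog_mul_two_pow_le_flog_rseq hr1 (by nlinarith)
  refine ⟨fun k => ?_, ?_⟩
  · have : flog r ≤ flog r * 2 ^ k := le_mul_of_one_le_right (by nlinarith) (one_le_pow₀ one_le_two)
    nlinarith [hgrowth k]
  exact (multipliable_inv_one_sub_div_sqrt (by linarith) (by nlinarith) hMr hgrowth).mul
    (multipliable_flog_nine_mul_div (fun k => by linarith [one_le_rseq hr1 k]) (by nlinarith)
      hgrowth)
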